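/- arXiv:2308.00656 — 2 statements merged into one kernel-verified Lean document; each statement's English description precedes it below -/
import Mathlib

section
/- Let F : 𝒞 ⥤ 𝒟 and G : 𝒟 ⥤ 𝒠 be lax symmetric monoidal functors, and equip the composite F ⋙ G with the composite lax symmetric monoidal structure (unit morphism η^{F⋙G} = η^G ≫ G(η^F) and structure morphisms μ^{F⋙G}_{a,b} = μ^G_{F(a),F(b)} ≫ G(μ^F_{a,b})). Then for every list xs of objects of 𝒞, the iterated structure maps compose: ξ^{F⋙G}(xs) = ξ^G(xs.map F) ≫ G(ξ^F(xs)). (This is the objectwise form of the paper's coherence of the 2-cells ξ under pasting.) -/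
open CategoryTheory Category MonoidalCategory

universe v v' v'' u u' u''

namespace Paper

variable {C : Type u} [Category.{v} C] [MonoidalCategory C]

/-- The left-normalized tensor product of a list of objects:
`T [] = 𝟙_ C`, `T [x] = x`, and `T (l ++ [x]) = T l ⊗ x` for `l` nonempty. -/
def T : List C → C
  | [] => 𝟙_ C
  | x :: l => l.foldl (fun a b => a ⊗ b) x

@[simp] lemma T_nil : T ([] : List C) = 𝟙_ C := rfl
@[simp] lemma T_singleton (x : C) : T [x] = x := rfl

lemma T_concat (x : C) (l : List C) (y : C) :
    T (x :: l ++ [y]) = T (x :: l) ⊗ y := by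
  simp [T, List.foldl_append]

lemma T_concat' {l : List C} (h : l ≠ []) (y : C) :
    T (l ++ [y]) = T l ⊗ y := by
  cases l with
  | nil => exact absurd rfl h
  | cons x l => exact T_concat x l y

lemma T_concat2 (x : C) (l : List C) (a b : C) :
    T (x :: l ++ [a, b]) = (T (x :: l) ⊗ a) ⊗ b := by
  simp [T, List.foldl_append]

/-- Auxiliary definition for the splitting isomorphism, in the case where the
first list is nonempty:  for nonempty `xs`, `splitIso xs [y] = 𝟙` and
`splitIso xs (l ++ [y]) = (splitIso xs l ⊗ 𝟙 y) ≫ α` for `l` nonempty. -/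
def splitIsoAux (x : C) (xs' : List C) :
    (ys : List C) → (T ((x :: xs') ++ ys) ≅ T (x :: xs') ⊗ T ys) := fun ys =>
  ys.reverseRecOn
    (eqToIso (by rw [List.append_nil]) ≪≫ (ρ_ (T (x :: xs'))).symm)
    (fun l y ih =>
      match l, ih with
      | [], _ => eqToIso (T_concat x xs' y)
      | a :: l', ih =>
          eqToIso (by rw [← List.append_assoc]; exact T_concat' (by simp) y) ≪≫
            whiskerRightIso ih y ≪≫ α_ (T (x :: xs')) (T (a :: l')) y ≪≫
            whiskerLeftIso (T (x :: xs')) (eqToIso (T_concat a l' y).symm))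

/-- The splitting isomorphism `φ_{xs,ys} : T (xs ++ ys) ≅ T xs ⊗ T ys`, defined by the
clauses (in order of priority): `φ_{xs,[]} = (ρ_ (T xs)).symm`, `φ_{[],ys} = (λ_ (T ys)).symm`,
`φ_{xs,[y]} = 𝟙` for `xs` nonempty, and
`φ_{xs,l++[y]} = (φ_{xs,l} ⊗ 𝟙 y) ≫ α_ (T xs) (T l) y` for `xs`, `l` nonempty. -/
def splitIso : (xs ys : List C) → (T (xs ++ ys) ≅ T xs ⊗ T ys)
  | xs, [] => eqToIso (by rw [List.append_nil]) ≪≫ (ρ_ (T xs)).symm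
  | [], y :: ys' => (λ_ (T (y :: ys'))).symm
  | x :: xs', y :: ys' => splitIsoAux x xs' (y :: ys')

/-- The left-normalized tensor product of a componentwise family of morphisms,
encoded as a list of arrows:  `Tmor [] = 𝟙 (𝟙_ C)`, `Tmor [f] = f.hom`, and
`Tmor (l ++ [f]) = Tmor l ⊗ f.hom` for `l` nonempty. -/
def Tmor : (fs : List (Arrow C)) → (T (fs.map Comma.left) ⟶ T (fs.map Comma.right)) := fun fs =>
  fs.reverseRecOn
    (𝟙 (𝟙_ C))
    (fun l f ih =>
      match l, ih with
      | [], _ => f.hom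
      | a :: l', ih =>
          eqToHom (by erw [List.map_append]; exact T_concat' (List.cons_ne_nil _ _) _) ≫
            (ih ⊗ₘ f.hom) ≫
            eqToHom (by erw [List.map_append]; exact (T_concat' (List.cons_ne_nil _ _) _).symm))

/-- The regrouping isomorphism `Φ(xss) : T (xss.flatten) ⟶ T (xss.map T)` defined by
`Φ([]) = 𝟙` and `Φ(xss ++ [v]) = φ_{xss.flatten,v} ≫ (Φ(xss) ⊗ 𝟙) ≫ (φ_{xss.map T,[T v]})⁻¹`. -/
def Phi : (xss : List (List C)) → (T xss.flatten ⟶ T (xss.map T)) := fun xss =>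
  xss.reverseRecOn
    (𝟙 (𝟙_ C))
    (fun l v ih =>
      eqToHom (congrArg T (by simp)) ≫
        (splitIso l.flatten v).hom ≫
        (ih ⊗ₘ 𝟙 (T v)) ≫
        (splitIso (l.map T) [T v]).inv ≫
        eqToHom (congrArg T (by simp)))

/-- A multimorphism: a list of source objects together with a morphism out of their
left-normalized tensor product into a target object. -/
structure MultiMor (C : Type u) [Category.{v} C] [MonoidalCategory C] where
  src : List C
  tgt : C
  hom : T src ⟶ tgt

/-- The multicomposition `Γ(g; ⟨f_s⟩) = Φ(xss) ≫ Tmor ⟨f_s⟩ ≫ g` of the underlying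
multicategory of a monoidal category (for the left-normalized bracketing). -/
def Gamma {z : C} (fs : List (MultiMor C)) (g : T (fs.map MultiMor.tgt) ⟶ z) :
    T ((fs.map MultiMor.src).flatten) ⟶ z :=
  Phi (fs.map MultiMor.src) ≫
    eqToHom (congrArg T (by erw [List.map_map, List.map_map]; exact rfl)) ≫
    Tmor (fs.map fun m => Arrow.mk m.hom) ≫
    eqToHom (congrArg T (by erw [List.map_map]; exact rfl)) ≫ g

section LaxPart
open Functor.LaxMonoidal

variable {C : Type u} [Category.{v} C] [MonoidalCategory C]
variable {D : Type u'} [Category.{v'} D] [MonoidalCategory D]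

/-- The iterated structure map `ξ(xs) : T (xs.map F.obj) ⟶ F.obj (T xs)` of a lax
monoidal functor, defined by `ξ([]) = ε`, `ξ([x]) = 𝟙`, and
`ξ(l ++ [x]) = (ξ(l) ⊗ 𝟙) ≫ μ F (T l) x` for `l` nonempty. -/
def xi (F : C ⥤ D) [F.LaxMonoidal] :
    (xs : List C) → (T (xs.map F.obj) ⟶ F.obj (T xs)) := fun xs =>
  xs.reverseRecOn
    (ε F)
    (fun l x ih =>
      match l, ih with
      | [], _ => 𝟙 (F.obj x)
      | a :: l', ih =>
          eqToHom (by rw [List.map_append]; exact T_concat' (by simp) (F.obj x)) ≫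
            (ih ⊗ₘ 𝟙 (F.obj x)) ≫ μ F (T (a :: l')) x ≫
            eqToHom (congrArg F.obj (T_concat a l' x).symm))

end LaxPart

section BraidedPart

variable {C : Type u} [Category.{v} C] [MonoidalCategory C] [BraidedCategory C]

/-- The adjacent-swap coherence isomorphism
`Θ_{l,a,b,r} : T (l ++ [a,b] ++ r) ⟶ T (l ++ [b,a] ++ r)`, defined by
`Θ_{[],a,b,[]} = β_{a,b}`, `Θ_{l,a,b,[]} = α ≫ (𝟙 ⊗ β) ≫ α⁻¹` for `l` nonempty, and
`Θ_{l,a,b,r++[c]} = Θ_{l,a,b,r} ⊗ 𝟙 c`. -/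
def Theta (l : List C) (a b : C) :
    (r : List C) → (T (l ++ [a, b] ++ r) ⟶ T (l ++ [b, a] ++ r)) := fun r =>
  r.reverseRecOn
    (match l with
      | [] => (β_ a b).hom
      | x :: l' =>
          eqToHom (by rw [List.append_nil]; exact T_concat2 x l' a b) ≫
            (α_ (T (x :: l')) a b).hom ≫ (𝟙 (T (x :: l')) ⊗ₘ (β_ a b).hom) ≫
            (α_ (T (x :: l')) b a).inv ≫
            eqToHom (by rw [List.append_nil]; exact (T_concat2 x l' b a).symm))
    (fun r' c ih =>
      eqToHom (by rw [← List.append_assoc]; exact T_concat' (by simp) c) ≫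
        (ih ⊗ₘ 𝟙 c) ≫
        eqToHom (by rw [← List.append_assoc]; exact (T_concat' (by simp) c).symm))

end BraidedPart

section MultifunctorPart

variable (C : Type u) [Category.{v} C] [MonoidalCategory C] [SymmetricCategory C]
variable (D : Type u') [Category.{v'} D] [MonoidalCategory D] [SymmetricCategory D]

/-- A multifunctor family from `C` to `D`: an object function `obj` together with maps
`app xs y : (T xs ⟶ y) → (T (xs.map obj) ⟶ obj y)` preserving identities,
multicomposition, and the braiding action transposing the two inputs of a binary
multimorphism.  This encodes a multifunctor between the underlying multicategories. -/
structure MultifunctorFamily where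
  obj : C → D
  app : ∀ (xs : List C) (y : C), (T xs ⟶ y) → (T (xs.map obj) ⟶ obj y)
  app_id : ∀ a : C, app [a] a (𝟙 a) = 𝟙 (obj a)
  app_comp : ∀ (z : C) (fs : List (MultiMor C)) (g : T (fs.map MultiMor.tgt) ⟶ z),
    app ((fs.map MultiMor.src).flatten) z (Gamma fs g) =
      eqToHom (congrArg T
          (by rw [List.map_flatten, List.map_map, List.map_map]; exact rfl)) ≫
        Gamma (fs.map fun m => MultiMor.mk (m.src.map obj) (obj m.tgt) (app m.src m.tgt m.hom))
          (eqToHom (congrArg T (by rw [List.map_map, List.map_map]; exact rfl)) ≫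
            app (fs.map MultiMor.tgt) z g)
  app_braiding : ∀ (a b y : C) (f : T [a, b] ⟶ y),
    app [b, a] y ((β_ b a).hom ≫ f) = (β_ (obj b) (obj a)).hom ≫ app [a, b] y f

end MultifunctorPart



section AuxLemmas
open Functor.LaxMonoidal
variable {C : Type u} [Category.{v} C] [MonoidalCategory C]
variable {D : Type u'} [Category.{v'} D] [MonoidalCategory D]

lemma xi_nil (F : C ⥤ D) [F.LaxMonoidal] : xi F [] = ε F := by
  simp only [xi]
  exact List.reverseRecOn_nil _ _

lemma xi_singleton (F : C ⥤ D) [F.LaxMonoidal] (x : C) : xi F [x] = 𝟙 (F.obj x) := by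
  show xi F ([] ++ [x]) = _
  simp only [xi]
  exact List.reverseRecOn_concat _ _ _ _

lemma xi_congr (F : C ⥤ D) [F.LaxMonoidal] {ys ys' : List C} (h : ys = ys') :
    xi F ys = eqToHom (by rw [h]) ≫ xi F ys' ≫ eqToHom (by rw [h]) := by
  subst h; simp

lemma xi_concat (F : C ⥤ D) [F.LaxMonoidal] (a : C) (l : List C) (x : C) :
    xi F (a :: (l ++ [x])) =
      eqToHom (by simpa using T_concat (F.obj a) (l.map F.obj) (F.obj x)) ≫
        ((xi F (a :: l)) ⊗ₘ 𝟙 (F.obj x)) ≫ μ F (T (a :: l)) x ≫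
        eqToHom (congrArg F.obj (T_concat a l x).symm) := by
  show xi F ((a :: l) ++ [x]) = _
  simp only [xi]
  exact List.reverseRecOn_concat _ _ _ _

end AuxLemmas

variable {C : Type u} [Category.{v} C] [MonoidalCategory C] [SymmetricCategory C]
variable {D : Type u'} [Category.{v'} D] [MonoidalCategory D] [SymmetricCategory D]

variable {E : Type u''} [Category.{v''} E] [MonoidalCategory E] [SymmetricCategory E]

/-- For lax symmetric monoidal functors `F : C ⥤ D` and `G : D ⥤ E`, with `F ⋙ G`
given the composite lax symmetric monoidal structure (whose unit morphism is
`ε G ≫ G.map (ε F)` and whose structure morphisms are `μ G _ _ ≫ G.map (μ F _ _)`),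
the iterated structure maps compose: `ξ^{F⋙G}(xs) = ξ^G(xs.map F) ≫ G(ξ^F(xs))`. -/
theorem xi_comp (F : C ⥤ D) (G : D ⥤ E) [F.LaxBraided] [G.LaxBraided] (xs : List C) :
    xi (F ⋙ G) xs =
      eqToHom (congrArg T (by rw [List.map_map]; exact rfl)) ≫
        xi G (xs.map F.obj) ≫ G.map (xi F xs) := by
  induction xs using List.reverseRecOn with
  | nil =>
    simp [xi_nil, Functor.LaxMonoidal.comp_ε]
    show _ = xi G [] ≫ _
    rw [xi_nil]
    rfl
  | append_singleton l x ih =>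
    cases l with
    | nil =>
      simp [xi_singleton]
      show _ = xi G [F.obj x] ≫ _
      rw [xi_singleton]
      erw [G.map_id, comp_id]
    | cons a l' =>
      simp only [List.cons_append] at ih ⊢
      rw [xi_concat (F ⋙ G) a l' x, xi_concat F a l' x,
        xi_congr G (show List.map F.obj (a :: (l' ++ [x]))
          = F.obj a :: (List.map F.obj l' ++ [F.obj x]) by simp),
        xi_concat G (F.obj a) (l'.map F.obj) (F.obj x), ih]
      simp [Functor.LaxMonoidal.comp_μ, eqToHom_map]
      rfl

end Paper
end

section
/- Let (F₀, F) be a multifunctor family from 𝒞 to 𝒟, with derived data η := F_{[],𝟙}(𝟙_{𝟙_𝒞}) and ξ_{a,b} := F_{[a,b],a⊗b}(𝟙_{a⊗b}). Then for every object a of 𝒞 the unit coherence diagram commutes: (𝟙_{F₀(a)} ⊗ η) ≫ ξ_{a,𝟙_𝒞} ≫ F_{[a⊗𝟙_𝒞],a}(ρ_a) = ρ_{F₀(a)}, as morphisms F₀(a) ⊗ 𝟙_𝒟 ⟶ F₀(a). -/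
open CategoryTheory Category MonoidalCategory

universe v v' v'' u u' u''

namespace Paper

variable {C : Type u} [Category.{v} C] [MonoidalCategory C]

variable {C : Type u} [Category.{v} C] [MonoidalCategory C] [SymmetricCategory C]
variable {D : Type u'} [Category.{v'} D] [MonoidalCategory D] [SymmetricCategory D]

section Scratch
variable {C : Type u} [Category.{v} C] [MonoidalCategory C]

@[simp] lemma T_pair (x y : C) : T [x, y] = x ⊗ y := rfl

lemma Phi_concat (xss : List (List C)) (v : List C) :
    Phi (xss ++ [v]) =
      eqToHom (congrArg T (by simp)) ≫
        (splitIso xss.flatten v).hom ≫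
        (Phi xss ⊗ₘ 𝟙 (T v)) ≫
        (splitIso (xss.map T) [T v]).inv ≫
        eqToHom (congrArg T (by simp)) := by
  unfold Phi; erw [List.reverseRecOn_concat]

lemma Tmor_one (f : Arrow C) : Tmor [f] = f.hom := by
  have h : Tmor ([] ++ [f]) = Tmor [f] := rfl
  rw [← h]
  unfold Tmor; erw [List.reverseRecOn_concat]

lemma Tmor_concat (f : Arrow C) (l : List (Arrow C)) (g : Arrow C) :
    Tmor ((f :: l) ++ [g]) =
      eqToHom (by erw [List.map_append]; exact T_concat' (List.cons_ne_nil _ _) _) ≫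
        (Tmor (f :: l) ⊗ₘ g.hom) ≫
        eqToHom (by erw [List.map_append]; exact (T_concat' (List.cons_ne_nil _ _) _).symm) := by
  unfold Tmor; erw [List.reverseRecOn_concat]


lemma Tmor_two (f g : Arrow C) : Tmor [f, g] = f.hom ⊗ₘ g.hom := by
  have h : Tmor ([f] ++ [g]) = Tmor [f, g] := rfl
  rw [← h, Tmor_concat, Tmor_one]
  erw [eqToHom_refl, eqToHom_refl, id_comp, comp_id]
  rfl

lemma splitIsoAux_sing (x : C) (xs' : List C) (y : C) :
    splitIsoAux x xs' [y] = eqToIso (T_concat x xs' y) := by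
  have h : splitIsoAux x xs' ([] ++ [y]) = splitIsoAux x xs' [y] := rfl
  rw [← h]
  unfold splitIsoAux; erw [List.reverseRecOn_concat]
  rfl

lemma splitIso_sing (x : C) (xs' : List C) (y : C) :
    splitIso (x :: xs') [y] = eqToIso (T_concat x xs' y) := splitIsoAux_sing x xs' y

lemma splitIso_nil_left (y : C) (ys : List C) :
    splitIso [] (y :: ys) = (λ_ (T (y :: ys))).symm := rfl

lemma Phi_nil : Phi ([] : List (List C)) = 𝟙 (𝟙_ C) := by
  unfold Phi; erw [List.reverseRecOn_nil]

lemma splitIso_nil_right (xs : List C) :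
    splitIso xs [] = eqToIso (by rw [List.append_nil]) ≪≫ (ρ_ (T xs)).symm := by
  cases xs <;> rfl

lemma Phi_one (x : C) : Phi [[x]] = 𝟙 x := by
  have h : Phi ([] ++ [[x]]) = Phi [[x]] := rfl
  rw [← h, Phi_concat, Phi_nil]
  erw [splitIso_nil_left, eqToHom_refl, id_tensorHom_id, id_comp, id_comp, Iso.hom_inv_id_assoc]
  rfl

lemma Phi_pair (x y : C) : Phi [[x, y]] = 𝟙 (x ⊗ y) := by
  have h : Phi ([] ++ [[x, y]]) = Phi [[x, y]] := rfl
  rw [← h, Phi_concat, Phi_nil]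
  erw [splitIso_nil_left, eqToHom_refl, id_tensorHom_id, id_comp, id_comp, Iso.hom_inv_id_assoc]
  rfl

lemma Phi_two (x : C) : Phi [[x], ([] : List C)] = (ρ_ x).inv := by
  have h : Phi ([[x]] ++ [([] : List C)]) = Phi [[x], ([] : List C)] := rfl
  rw [← h, Phi_concat, Phi_one]
  erw [splitIso_sing, splitIso_nil_right]
  simp only [Iso.trans_hom, eqToIso.hom, eqToIso.inv, Iso.symm_hom]
  erw [eqToHom_refl, eqToHom_refl, id_comp, id_comp, id_tensorHom_id, comp_id, comp_id, comp_id]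
  rfl

end Scratch

section Scratch2
variable {C : Type u} [Category.{v} C] [MonoidalCategory C]

lemma Gamma_pair {x y w z : C} (f : T [x, y] ⟶ w) (g : T [w] ⟶ z) :
    Gamma [MultiMor.mk [x, y] w f] g = f ≫ g := by
  simp [Gamma]
  erw [Phi_pair, Tmor_one]
  simp
  erw [id_comp]
  rfl

lemma Gamma_two {x w w' z : C} (f : T [x] ⟶ w) (e : T ([] : List C) ⟶ w')
    (g : T [w, w'] ⟶ z) :
    Gamma [MultiMor.mk [x] w f, MultiMor.mk [] w' e] g =
      (ρ_ x).inv ≫ (f ⊗ₘ e) ≫ g := by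
  simp [Gamma]
  erw [Phi_two, Tmor_two]
  simp
  rfl

end Scratch2
variable {C : Type u} [Category.{v} C] [MonoidalCategory C] [SymmetricCategory C]
variable {D : Type u'} [Category.{v'} D] [MonoidalCategory D] [SymmetricCategory D]

/-- The unit coherence diagram for the derived data `η` and `ξ` of a multifunctor
family: `(𝟙 ⊗ η) ≫ ξ_{a,𝟙} ≫ F(ρ_a) = ρ_{F₀ a}`. -/
theorem multifunctorFamily_right_unitality (P : MultifunctorFamily C D) (a : C) :
    (𝟙 (P.obj a) ⊗ₘ P.app [] (𝟙_ C) (𝟙 (𝟙_ C))) ≫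
        P.app [a, 𝟙_ C] (a ⊗ 𝟙_ C) (𝟙 (a ⊗ 𝟙_ C)) ≫
        P.app [a ⊗ 𝟙_ C] a (ρ_ a).hom =
      (ρ_ (P.obj a)).hom := by
  have H1 := P.app_comp a [MultiMor.mk [a, 𝟙_ C] (a ⊗ 𝟙_ C) (𝟙 (T [a, 𝟙_ C]))] (ρ_ a).hom
  have H2 := P.app_comp a
    [MultiMor.mk [a] a (𝟙 (T [a])), MultiMor.mk [] (𝟙_ C) (𝟙 (T ([] : List C)))] (ρ_ a).hom
  erw [Gamma_pair] at H1
  erw [Gamma_pair] at H1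
  erw [Gamma_two] at H2
  erw [Gamma_two] at H2
  erw [eqToHom_refl, eqToHom_refl, id_comp, id_comp, id_comp] at H1
  erw [eqToHom_refl, eqToHom_refl, id_comp, id_comp] at H2
  erw [P.app_id] at H2
  erw [← H1]
  apply (cancel_epi (ρ_ (P.obj a)).inv).1
  erw [← H2]
  erw [id_tensorHom_id, id_comp, Iso.inv_hom_id, Iso.inv_hom_id, P.app_id]

end Paper
end
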